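/- arXiv:1303.4536 — 4 statements merged into one kernel-verified Lean document; each statement's English description precedes it below -/
import Mathlib

section
/- For every row index r ∈ {1,…,n}, the row sum ∑_{c=1}^{n} F(r,c) equals n(n²+1)/2. -/
/-- Base array of the doubly-even construction: for `1 ≤ k ≤ n/2`,
if `k` is odd then `B r k = (k-1)n + r` and `B r (n+1-k) = 2p - kn + r`;
if `k` is even then `B r k = kn + 1 - r` and `B r (n+1-k) = 2p - (k-1)n + 1 - r`,
where `p = n²/2`. -/
def B (n r c : ℕ) : ℕ :=
  if c ≤ n / 2 then
    if Odd c then (c - 1) * n + r else c * n + 1 - r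
  else
    if Odd (n + 1 - c) then 2 * (n ^ 2 / 2) - (n + 1 - c) * n + r
    else 2 * (n ^ 2 / 2) - (n + 1 - c - 1) * n + 1 - r

/-- The set of rows to be swapped:
`S = {r : 1 ≤ r ≤ n, r even, r ≤ n/2} ∪ {r : 1 ≤ r ≤ n, r odd, n/2 < r ≤ n-1}`. -/
def S (n r : ℕ) : Prop :=
  1 ≤ r ∧ r ≤ n ∧ ((Even r ∧ r ≤ n / 2) ∨ (Odd r ∧ n / 2 < r ∧ r ≤ n - 1))

instance (n r : ℕ) : Decidable (S n r) := by unfold S; infer_instance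

/-- The final array: `F r c = B r (n+1-c)` if `r ∈ S`, and `F r c = B r c` otherwise. -/
def F (n r c : ℕ) : ℕ := if S n r then B n r (n + 1 - c) else B n r c

/-! Each row of `F` is a row of `B`, possibly read backwards, so it suffices to sum the rows
of `B`. Pairing column `k ≤ n/2` with its mirror column `n + 1 - k`, row `r` contributes
`n² - n + 2r` for odd `k` and `n² + n + 2 - 2r` for even `k`. As `n/2` is even, these come in
`n/4` odd–even couples, each summing to `2(n² + 1)`. -/

open Finset

lemma sum_Icc_reflect {M : Type*} [AddCommMonoid M] (n : ℕ) (f : ℕ → M) :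
    ∑ c ∈ Icc 1 n, f (n + 1 - c) = ∑ c ∈ Icc 1 n, f c := by
  refine sum_nbij' (fun c => n + 1 - c) (fun c => n + 1 - c) ?_ ?_ ?_ ?_ fun _ _ => rfl <;>
    intro c hc <;> simp only [mem_Icc] at hc ⊢ <;> omega

lemma sum_Icc_eq_sum_Icc_half_add_reflect {M : Type*} [AddCommMonoid M] {n : ℕ} (hn : Even n)
    (f : ℕ → M) :
    ∑ c ∈ Icc 1 n, f c = ∑ k ∈ Icc 1 (n / 2), (f k + f (n + 1 - k)) := by
  obtain ⟨m, rfl⟩ := hn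
  rw [← sum_filter_add_sum_filter_not (Icc 1 (m + m)) (· ≤ m), sum_add_distrib]
  congr 1
  · congr 1
    ext c
    simp only [mem_filter, mem_Icc]
    omega
  · symm
    refine sum_nbij' (fun c => m + m + 1 - c) (fun c => m + m + 1 - c) ?_ ?_ ?_ ?_
      fun _ _ => rfl <;> intro c hc <;> simp only [mem_filter, mem_Icc] at hc ⊢ <;> omega

lemma sum_Icc_ite_odd {M : Type*} [AddCommMonoid M] (q : ℕ) (a b : M) :
    ∑ k ∈ Icc 1 (2 * q), (if Odd k then a else b) = q • (a + b) := by
  induction q with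
  | zero => simp
  | succ q ih =>
    rw [show 2 * (q + 1) = 2 * q + 1 + 1 by ring, sum_Icc_succ_top (by omega),
      sum_Icc_succ_top (by omega), ih, succ_nsmul]
    have hodd : Odd (2 * q + 1) := odd_two_mul_add_one q
    have heven : ¬ Odd (2 * q + 1 + 1) := Nat.not_odd_iff_even.mpr ⟨q + 1, by ring⟩
    rw [if_pos hodd, if_neg heven, add_assoc]

lemma B_add_B_reflect {n r k : ℕ} (hn : Even n) (hr : r ≤ n) (hk₁ : 1 ≤ k)
    (hk₂ : k ≤ n / 2) :
    B n r k + B n r (n + 1 - k) = if Odd k then n ^ 2 - n + 2 * r else n ^ 2 + n + 2 - 2 * r := by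
  have hsq : 2 * (n ^ 2 / 2) = n ^ 2 :=
    Nat.two_mul_div_two_of_even ((Nat.even_pow' two_ne_zero).mpr hn)
  have hkn : 2 * (k * n) ≤ n ^ 2 :=
    calc 2 * (k * n) = (2 * k) * n := by ring
      _ ≤ n * n := Nat.mul_le_mul_right n (by omega)
      _ = n ^ 2 := (sq n).symm
  have hsub : (k - 1) * n = k * n - n := by rw [Nat.sub_mul, one_mul]
  have hnk : n ≤ k * n := Nat.le_mul_of_pos_left n hk₁
  simp only [B, if_pos hk₂, if_neg (show ¬ n + 1 - k ≤ n / 2 by omega),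
    show n + 1 - (n + 1 - k) = k by omega, hsq, hsub]
  split_ifs with hodd
  · omega
  · have h2k : 2 * n ≤ k * n :=
      Nat.mul_le_mul_right n (by obtain ⟨t, rfl⟩ := Nat.not_odd_iff_even.mp hodd; omega)
    omega

lemma sum_B_row {n r : ℕ} (hn : n % 4 = 0) (hr : r ≤ n) :
    ∑ c ∈ Icc 1 n, B n r c = n * (n ^ 2 + 1) / 2 := by
  obtain ⟨q, rfl⟩ : ∃ q, n = 4 * q := ⟨n / 4, by omega⟩
  have heven : Even (4 * q) := ⟨2 * q, by ring⟩
  rw [sum_Icc_eq_sum_Icc_half_add_reflect heven,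
    sum_congr rfl fun k hk => B_add_B_reflect heven hr (mem_Icc.mp hk).1 (mem_Icc.mp hk).2,
    show 4 * q / 2 = 2 * q by omega, sum_Icc_ite_odd, smul_eq_mul]
  have hle : 4 * q ≤ (4 * q) ^ 2 := Nat.le_self_pow two_ne_zero _
  rw [show (4 * q) ^ 2 - 4 * q + 2 * r + ((4 * q) ^ 2 + 4 * q + 2 - 2 * r)
      = 2 * ((4 * q) ^ 2 + 1) by omega,
    show 4 * q * ((4 * q) ^ 2 + 1) = 2 * (q * (2 * ((4 * q) ^ 2 + 1))) by ring,
    Nat.mul_div_cancel_left _ two_pos]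

lemma sum_F_row_eq_sum_B_row (n r : ℕ) :
    ∑ c ∈ Icc 1 n, F n r c = ∑ c ∈ Icc 1 n, B n r c := by
  unfold F
  split_ifs
  · exact sum_Icc_reflect n (B n r)
  · rfl

theorem doubly_even_row_sums_general (n : ℕ) (h4 : n % 4 = 0) :
    ∀ r ∈ Finset.Icc 1 n, ∑ c ∈ Finset.Icc 1 n, F n r c = n * (n ^ 2 + 1) / 2 := by
  intro r hr
  rw [sum_F_row_eq_sum_B_row]
  exact sum_B_row h4 (Finset.mem_Icc.mp hr).2

/-- Every row of `F` sums to `n(n²+1)/2`. -/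
theorem doubly_even_row_sums (n : ℕ) (h4 : n % 4 = 0) (hn : 4 ≤ n) :
    ∀ r ∈ Finset.Icc 1 n, ∑ c ∈ Finset.Icc 1 n, F n r c = n * (n ^ 2 + 1) / 2 :=
  doubly_even_row_sums_general n h4
end

section
/- For every row index r ∈ {1,…,n−2}, the row sum of the inner array satisfies ∑_{c=1}^{n} G(r,c) = n(n² + 1)/2. -/
/-- Base array of the singly-even construction on rows `1 ≤ r ≤ n-2`, columns `1 ≤ c ≤ n`:
for `1 ≤ k ≤ n/2 - 1`, if `k` is odd then `B' r k = (k-1)(n-2) + r` and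
`B' r (n+1-k) = 2p - k(n-2) + r`; if `k` is even then `B' r k = k(n-2) + 1 - r` and
`B' r (n+1-k) = 2p - (k-1)(n-2) + 1 - r`; and for `k = m = n/2`,
`B' r m = (m-1)(n-2) + r` and `B' r (m+1) = 2p - (m-1)(n-2) + 1 - r`, where `p = n²/2`. -/
def B' (n r c : ℕ) : ℕ :=
  if c ≤ n / 2 - 1 then
    if Odd c then (c - 1) * (n - 2) + r else c * (n - 2) + 1 - r
  else if c = n / 2 then (n / 2 - 1) * (n - 2) + r
  else if c = n / 2 + 1 then 2 * (n ^ 2 / 2) - (n / 2 - 1) * (n - 2) + 1 - r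
  else
    if Odd (n + 1 - c) then 2 * (n ^ 2 / 2) - (n + 1 - c) * (n - 2) + r
    else 2 * (n ^ 2 / 2) - (n + 1 - c - 1) * (n - 2) + 1 - r

/-- The set of rows to be swapped:
`S' = {r : r even, r ≤ (n-2)/2} ∪ {r : r odd, (n-2)/2 < r ≤ n-3}`. -/
def S' (n r : ℕ) : Prop :=
  (Even r ∧ r ≤ (n - 2) / 2) ∨ (Odd r ∧ (n - 2) / 2 < r ∧ r ≤ n - 3)

instance (n r : ℕ) : Decidable (S' n r) := by unfold S'; infer_instance

/-- The inner array: `G r c = B' r (n+1-c)` if `r ∈ S'`, and `G r c = B' r c` otherwise. -/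
def G (n r c : ℕ) : ℕ := if S' n r then B' n r (n + 1 - c) else B' n r c

/-- The first row of the singly-even construction, with `p = n²/2` and `m = n/2`:
`R₁ 1 = p+1`, `R₁ n = p+2`, `R₁ (m+2) = p+n-m`, `R₁ (m+3) = p+n-m-1`;
for `2 ≤ j ≤ m+1`, `R₁ j = p-n+j-1` if `j` even and `R₁ j = p+n+2-j` if `j` odd;
for `m+4 ≤ j ≤ n-1`, `R₁ j = p-n+j-1` if `j` odd and `R₁ j = p+n+2-j` if `j` even. -/
def R1 (n j : ℕ) : ℕ :=
  if j = 1 then n ^ 2 / 2 + 1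
  else if j = n then n ^ 2 / 2 + 2
  else if j = n / 2 + 2 then n ^ 2 / 2 + n - n / 2
  else if j = n / 2 + 3 then n ^ 2 / 2 + n - n / 2 - 1
  else if j ≤ n / 2 + 1 then
    if Even j then n ^ 2 / 2 - n + j - 1 else n ^ 2 / 2 + n + 2 - j
  else
    if Odd j then n ^ 2 / 2 - n + j - 1 else n ^ 2 / 2 + n + 2 - j

/-- The last row: `Rₙ j = n² + 1 - R₁ j`. -/
def Rn (n j : ℕ) : ℕ := n ^ 2 + 1 - R1 n j

/-- The complete singly-even array: first row `R₁`, last row `Rₙ`,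
and `F' r c = G (r-1) c` for `2 ≤ r ≤ n-1`. -/
def F' (n r c : ℕ) : ℕ :=
  if r = 1 then R1 n c else if r = n then Rn n c else G n (r - 1) c


/-! Pair column `k` of `B'` with column `n + 1 - k`. For `k < m` the pair sums to
`n² - (n - 2) + 2r` or `n² + (n - 2) + 2 - 2r` according to the parity of `k`, so the two pairs
of columns `2j + 1, 2j + 2` together contribute `2(n² + 1)`; the middle pair `m, m + 1`
contributes `n² + 1`. As `m - 1` is even when `n ≡ 2 (mod 4)`, every row of `B'` sums to
`m(n² + 1)`, and the rows of `G` are rows of `B'`, possibly reversed. -/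

open Finset

section Reindexing

variable {M : Type*} [AddCommMonoid M]

theorem Finset.sum_Icc_one_reflect (f : ℕ → M) (n : ℕ) :
    ∑ c ∈ Icc 1 n, f (n + 1 - c) = ∑ c ∈ Icc 1 n, f c := by
  simpa [Ico_add_one_right_eq_Icc] using sum_Ico_reflect f 1 (m := n + 1) (n := n + 1) (by omega)

theorem Finset.sum_Icc_one_two_mul_eq_sum_add_reflect (f : ℕ → M) (m : ℕ) :
    ∑ c ∈ Icc 1 (2 * m), f c = ∑ k ∈ Icc 1 m, (f k + f (2 * m + 1 - k)) := by
  have hIcc (k : ℕ) : Icc 1 k = Ioc 0 k := Icc_add_one_left_eq_Ioc 0 k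
  have hreflect : ∑ c ∈ Ioc m (2 * m), f c = ∑ k ∈ Ioc 0 m, f (2 * m + 1 - k) := by
    refine sum_nbij' (fun c => 2 * m + 1 - c) (fun c => 2 * m + 1 - c) ?_ ?_ ?_ ?_ ?_ <;>
      intro c hc <;> simp only [mem_Ioc] at * <;> first | omega | (congr 1; omega)
  rw [hIcc, hIcc, sum_add_distrib, ← hreflect, sum_Ioc_consecutive f (Nat.zero_le m) (by omega)]

theorem Finset.sum_Icc_one_two_mul_eq_sum_range_pairs (g : ℕ → M) (s : ℕ) :
    ∑ k ∈ Icc 1 (2 * s), g k = ∑ j ∈ range s, (g (2 * j + 1) + g (2 * j + 2)) := by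
  induction s with
  | zero => simp
  | succ s ih =>
    rw [show 2 * (s + 1) = 2 * s + 1 + 1 by ring, sum_Icc_succ_top (by omega),
      sum_Icc_succ_top (by omega), ih, sum_range_succ, add_assoc]

end Reindexing

namespace B'

variable {n r k j : ℕ}

theorem eq_of_odd (hk : k ≤ n / 2 - 1) (hodd : Odd k) : B' n r k = (k - 1) * (n - 2) + r := by
  simp [B', hk, hodd]

theorem eq_of_even (hk : k ≤ n / 2 - 1) (heven : Even k) : B' n r k = k * (n - 2) + 1 - r := by
  simp [B', hk, Nat.not_odd_iff_even.mpr heven]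

theorem reflect_eq_of_odd (hk : k ≤ n / 2 - 1) (hodd : Odd k) :
    B' n r (n + 1 - k) = 2 * (n ^ 2 / 2) - k * (n - 2) + r := by
  have hk₀ : 0 < k := hodd.pos
  rw [B', if_neg (by omega), if_neg (by omega), if_neg (by omega),
    show n + 1 - (n + 1 - k) = k by omega, if_pos hodd]

theorem reflect_eq_of_even (hk₀ : 0 < k) (hk : k ≤ n / 2 - 1) (heven : Even k) :
    B' n r (n + 1 - k) = 2 * (n ^ 2 / 2) - (k - 1) * (n - 2) + 1 - r := by
  rw [B', if_neg (by omega), if_neg (by omega), if_neg (by omega),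
    show n + 1 - (n + 1 - k) = k by omega, if_neg (Nat.not_odd_iff_even.mpr heven)]

theorem eq_of_two_mul (hn : n = 2 * k) (hk : 1 ≤ k) : B' n r k = (k - 1) * (n - 2) + r := by
  rw [B', if_neg (by omega), if_pos (by omega), show n / 2 = k by omega]

theorem reflect_eq_of_two_mul (hn : n = 2 * k) :
    B' n r (n + 1 - k) = n ^ 2 - (k - 1) * (n - 2) + 1 - r := by
  rw [B', if_neg (by omega), if_neg (by omega), if_pos (by omega), show n / 2 = k by omega,
    Nat.two_mul_div_two_of_even ⟨2 * k ^ 2, by subst hn; ring⟩]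

theorem add_reflect_of_two_mul (hn : n = 2 * k) (hk : 1 ≤ k) (hr : r ≤ n - 2) :
    B' n r k + B' n r (n + 1 - k) = n ^ 2 + 1 := by
  have hbound : (k - 1) * (n - 2) + (n - 2) ≤ n ^ 2 :=
    calc (k - 1) * (n - 2) + (n - 2) = k * (n - 2) := by
          rw [← Nat.succ_mul, Nat.succ_eq_add_one, Nat.sub_add_cancel hk]
      _ ≤ n * n := Nat.mul_le_mul (by omega) (by omega)
      _ = n ^ 2 := (sq n).symm
  rw [eq_of_two_mul hn hk, reflect_eq_of_two_mul hn]
  omega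

theorem add_reflect_odd_even (heven : Even n) (hj : 2 * j + 2 ≤ n / 2 - 1) (hr : r ≤ n - 2) :
    B' n r (2 * j + 1) + B' n r (n + 1 - (2 * j + 1)) +
      (B' n r (2 * j + 2) + B' n r (n + 1 - (2 * j + 2))) = 2 * (n ^ 2 + 1) := by
  have hsq : 2 * (n ^ 2 / 2) = n ^ 2 :=
    Nat.two_mul_div_two_of_even (heven.pow_of_ne_zero two_ne_zero)
  have hbound : (2 * j + 2) * (n - 2) ≤ n ^ 2 :=
    (Nat.mul_le_mul (by omega) (by omega) : _ ≤ n * n).trans_eq (sq n).symm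
  have hprev : 2 * j * (n - 2) + (n - 2) = (2 * j + 1) * (n - 2) := by ring
  have hnext : (2 * j + 2) * (n - 2) = (2 * j + 1) * (n - 2) + (n - 2) := by ring
  have hodd : Odd (2 * j + 1) := odd_two_mul_add_one j
  have heven' : Even (2 * j + 2) := ⟨j + 1, by ring⟩
  rw [eq_of_odd (by omega) hodd, reflect_eq_of_odd (by omega) hodd, eq_of_even (by omega) heven',
    reflect_eq_of_even (by omega) (by omega) heven', Nat.add_sub_cancel,
    show 2 * j + 2 - 1 = 2 * j + 1 from rfl]
  omega

theorem sum_Icc_one (h2 : n % 4 = 2) (hr : r ≤ n - 2) :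
    ∑ c ∈ Icc 1 n, B' n r c = n * (n ^ 2 + 1) / 2 := by
  obtain ⟨s, rfl⟩ : ∃ s, n = 2 * (2 * s + 1) := ⟨n / 4, by omega⟩
  rw [sum_Icc_one_two_mul_eq_sum_add_reflect, sum_Icc_succ_top (by omega),
    sum_Icc_one_two_mul_eq_sum_range_pairs,
    sum_congr rfl fun j hj =>
      add_reflect_odd_even (even_two_mul _) (by rw [mem_range] at hj; omega) hr,
    sum_const, card_range, smul_eq_mul, add_reflect_of_two_mul rfl (by omega) hr,
    mul_assoc 2, Nat.mul_div_cancel_left _ two_pos]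
  ring

end B'

theorem singly_even_inner_row_sums_general (n : ℕ) (h2 : n % 4 = 2) :
    ∀ r ∈ Finset.Icc 1 (n - 2),
      ∑ c ∈ Finset.Icc 1 n, G n r c = n * (n ^ 2 + 1) / 2 := by
  intro r hr
  have hr' : r ≤ n - 2 := (mem_Icc.mp hr).2
  by_cases hS : S' n r
  · simp only [G, if_pos hS]
    rw [sum_Icc_one_reflect (B' n r), B'.sum_Icc_one h2 hr']
  · simp only [G, if_neg hS]
    exact B'.sum_Icc_one h2 hr'

/-- Every row of the inner array `G` sums to `n(n² + 1)/2`. -/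
theorem singly_even_inner_row_sums (n : ℕ) (h2 : n % 4 = 2) (hn : 6 ≤ n) :
    ∀ r ∈ Finset.Icc 1 (n - 2),
      ∑ c ∈ Finset.Icc 1 n, G n r c = n * (n ^ 2 + 1) / 2 :=
  singly_even_inner_row_sums_general n h2
end

section
/- The map (r,c) ↦ G(r,c) is a bijection from {1,…,n−2} × {1,…,n} onto the set {1,…,p−n} ∪ {p+n+1,…,n²}; equivalently, the inner array uses each number from 1 to n² except the 2n middle numbers p−n+1, …, p+n exactly once. -/
/-! Read column by column, the base array `B'` fills column `c` with the `n - 2` consecutive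
numbers after `(c - 1)(n - 2)`, upwards or downwards, except that in the right half `c > n/2`
everything is shifted up by `2n`, because `n² - (n + 1 - c)(n - 2) = (c - 1)(n - 2) + 2n`.
So `B'` is the enumeration `(r, c) ↦ r + (c - 1)(n - 2)` of `{1, …, n(n - 2)}`, precomposed with
reversing the rows inside some columns and followed by the map that skips the `2n` numbers
above `(n/2)(n - 2) = p - n`; `G` further precomposes it with reversing the columns inside the
rows of `S'`. -/

open Set

theorem Set.BijOn.of_leftInvOn_self {α : Type*} {f : α → α} {s : Set α}
    (hf : MapsTo f s s) (hinv : LeftInvOn f f s) : BijOn f s s :=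
  InvOn.bijOn ⟨hinv, hinv⟩ hf hf

def reflectIf (P : Prop) [Decidable P] (N c : ℕ) : ℕ := if P then N + 1 - c else c

section reflectIf

variable {P : Prop} [Decidable P] {N c : ℕ}

theorem reflectIf_mem_Icc (hc : c ∈ Icc 1 N) : reflectIf P N c ∈ Icc 1 N := by
  simp only [mem_Icc] at hc ⊢
  unfold reflectIf
  split_ifs <;> omega

theorem reflectIf_reflectIf (hc : c ∈ Icc 1 N) : reflectIf P N (reflectIf P N c) = c := by
  simp only [mem_Icc] at hc
  unfold reflectIf
  split_ifs <;> omega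

end reflectIf

theorem bijOn_reflectIf_snd (P : ℕ → Prop) [DecidablePred P] (s : Set ℕ) (N : ℕ) :
    BijOn (fun p : ℕ × ℕ => (p.1, reflectIf (P p.1) N p.2)) (s ×ˢ Icc 1 N) (s ×ˢ Icc 1 N) :=
  .of_leftInvOn_self (fun _ hp => ⟨hp.1, reflectIf_mem_Icc hp.2⟩)
    (fun _ hp => Prod.ext rfl (reflectIf_reflectIf hp.2))

theorem bijOn_reflectIf_fst (P : ℕ → Prop) [DecidablePred P] (N : ℕ) (t : Set ℕ) :
    BijOn (fun p : ℕ × ℕ => (reflectIf (P p.2) N p.1, p.2)) (Icc 1 N ×ˢ t) (Icc 1 N ×ˢ t) :=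
  .of_leftInvOn_self (fun _ hp => ⟨reflectIf_mem_Icc hp.1, hp.2⟩)
    (fun _ hp => Prod.ext (reflectIf_reflectIf hp.1) rfl)

theorem bijOn_add_pred_mul (q N : ℕ) :
    BijOn (fun p : ℕ × ℕ => p.1 + (p.2 - 1) * q) (Icc 1 q ×ˢ Icc 1 N) (Icc 1 (N * q)) := by
  refine ⟨?_, ?_, ?_⟩
  · rintro ⟨x, c⟩ ⟨⟨hx1, hxq⟩, hc1, hcN⟩
    have : c * q ≤ N * q := Nat.mul_le_mul_right q hcN
    have : c * q = (c - 1) * q + q := by rw [← Nat.succ_mul]; congr; omega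
    simp only [mem_Icc]
    omega
  · rintro ⟨x, c⟩ ⟨⟨hx1, hxq⟩, hc1, -⟩ ⟨x', c'⟩ ⟨⟨hx1', hxq'⟩, hc1', -⟩ h
    have hq : 0 < q := by omega
    have decode : ∀ y d, y < q → (y + d * q) / q = d ∧ (y + d * q) % q = y := fun y d hy =>
      ⟨by rw [Nat.add_mul_div_right _ _ hq, Nat.div_eq_of_lt hy, zero_add],
        by rw [Nat.add_mul_mod_self_right, Nat.mod_eq_of_lt hy]⟩
    obtain ⟨hd, hm⟩ := decode (x - 1) (c - 1) (by omega)
    obtain ⟨hd', hm'⟩ := decode (x' - 1) (c' - 1) (by omega)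
    have : x - 1 + (c - 1) * q = x' - 1 + (c' - 1) * q := by simp only at h; omega
    rw [this] at hd hm
    simp only [Prod.mk.injEq]
    omega
  · rintro v ⟨hv1, hvN⟩
    have hq : 0 < q := Nat.pos_of_ne_zero (by rintro rfl; omega)
    have : (v - 1) / q < N := (Nat.div_lt_iff_lt_mul hq).2 (by omega)
    refine ⟨((v - 1) % q + 1, (v - 1) / q + 1),
      ⟨⟨Nat.le_add_left _ _, Nat.mod_lt _ hq⟩, Nat.le_add_left _ _, this⟩, ?_⟩
    have := Nat.mod_add_div' (v - 1) q
    simp only [Nat.add_sub_cancel]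
    omega

def shiftAbove (K g v : ℕ) : ℕ := if v ≤ K then v else v + g

theorem bijOn_shiftAbove {K N : ℕ} (g : ℕ) (hK : K ≤ N) :
    BijOn (shiftAbove K g) (Icc 1 N) (Icc 1 K ∪ Icc (K + g + 1) (N + g)) := by
  refine ⟨?_, ?_, ?_⟩
  · intro v hv
    simp only [shiftAbove, mem_Icc, mem_union] at hv ⊢
    split_ifs <;> omega
  · intro v _ w _ h
    simp only [shiftAbove] at h
    split_ifs at h <;> omega
  · rintro v (⟨hv1, hvK⟩ | ⟨hv1, hvN⟩)
    · exact ⟨v, ⟨hv1, hvK.trans hK⟩, if_pos hvK⟩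
    · exact ⟨v - g, ⟨by omega, by omega⟩, by simp only [shiftAbove]; split_ifs <;> omega⟩

theorem sq_eq_mul_sub_two_add_two_mul {n : ℕ} (hn : 2 ≤ n) : n ^ 2 = n * (n - 2) + 2 * n := by
  rw [sq, mul_comm 2 n, ← Nat.mul_add, Nat.sub_add_cancel hn]

theorem two_mul_div_two_mul {n : ℕ} (hn : Even n) (k : ℕ) : 2 * (n / 2 * k) = n * k := by
  rw [← mul_assoc, Nat.mul_div_cancel' (even_iff_two_dvd.1 hn)]

def IsDescendingColumn (n c : ℕ) : Prop :=
  c ≤ n / 2 - 1 ∧ Even c ∨ c = n / 2 + 1 ∨ n / 2 + 1 < c ∧ Even (n + 1 - c)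

instance (n c : ℕ) : Decidable (IsDescendingColumn n c) := by
  unfold IsDescendingColumn; infer_instance

theorem B'_eq_shiftAbove {n r c : ℕ} (hn : Even n) (hr : r ∈ Icc 1 (n - 2)) (hc : c ∈ Icc 1 n) :
    B' n r c = shiftAbove (n / 2 * (n - 2)) (2 * n)
      (reflectIf (IsDescendingColumn n c) (n - 2) r + (c - 1) * (n - 2)) := by
  simp only [mem_Icc] at hr hc
  have pred_mul : ∀ a, 1 ≤ a → a * (n - 2) = (a - 1) * (n - 2) + (n - 2) := fun a ha => by
    rw [← Nat.succ_mul]; congr; omega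
  -- the linear relations between the products occurring in the branches, for `omega`
  have := pred_mul c (by omega)
  have := pred_mul (n + 1 - c) (by omega)
  have := pred_mul (n / 2) (by omega)
  have : (n + 1 - c) * (n - 2) + (c - 1) * (n - 2) = n * (n - 2) := by
    rw [← Nat.add_mul]; congr; omega
  have := two_mul_div_two_mul hn (n - 2)
  have := sq_eq_mul_sub_two_add_two_mul (show 2 ≤ n by omega)
  have : c ≤ n / 2 → c * (n - 2) ≤ n / 2 * (n - 2) := (Nat.mul_le_mul_right _ ·)
  have : n / 2 + 1 ≤ c → (n / 2 + 1) * (n - 2) ≤ c * (n - 2) := (Nat.mul_le_mul_right _ ·)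
  have : (n / 2 + 1) * (n - 2) = n / 2 * (n - 2) + (n - 2) := Nat.succ_mul _ _
  have : c = n / 2 → (c - 1) * (n - 2) = (n / 2 - 1) * (n - 2) := by rintro rfl; rfl
  have : c = n / 2 + 1 → (c - 1) * (n - 2) = n / 2 * (n - 2) := by rintro rfl; rfl
  have := Nat.even_iff.1 hn
  simp only [B', IsDescendingColumn, reflectIf, shiftAbove, Nat.odd_iff, Nat.even_iff]
  split_ifs <;> omega

theorem G_eq_B'_reflectIf (n r c : ℕ) : G n r c = B' n r (reflectIf (S' n r) n c) := by
  unfold G reflectIf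
  split_ifs <;> rfl

theorem singly_even_inner_bijective_general (n : ℕ) (h2 : n % 4 = 2) :
    Set.BijOn (fun rc : ℕ × ℕ => G n rc.1 rc.2)
      (Set.Icc 1 (n - 2) ×ˢ Set.Icc 1 n)
      (Set.Icc 1 (n ^ 2 / 2 - n) ∪ Set.Icc (n ^ 2 / 2 + n + 1) (n ^ 2)) := by
  have hn : Even n := Nat.even_iff.2 (by omega)
  have hsq := sq_eq_mul_sub_two_add_two_mul (show 2 ≤ n by omega)
  have hhalf := two_mul_div_two_mul hn (n - 2)
  have hlow : n ^ 2 / 2 - n = n / 2 * (n - 2) := by omega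
  have hhigh : n ^ 2 / 2 + n + 1 = n / 2 * (n - 2) + 2 * n + 1 := by omega
  rw [hlow, hhigh, hsq]
  refine ((bijOn_shiftAbove (2 * n) (Nat.mul_le_mul_right _ (Nat.div_le_self n 2))).comp <|
    (bijOn_add_pred_mul (n - 2) n).comp <|
    (bijOn_reflectIf_fst (IsDescendingColumn n) (n - 2) (Icc 1 n)).comp <|
    bijOn_reflectIf_snd (S' n) (Icc 1 (n - 2)) n).congr ?_
  rintro ⟨r, c⟩ ⟨hr, hc⟩
  exact ((G_eq_B'_reflectIf n r c).trans (B'_eq_shiftAbove hn hr (reflectIf_mem_Icc hc))).symm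

/-- The map `(r,c) ↦ G r c` is a bijection from `{1,…,n-2} × {1,…,n}` onto
`{1,…,p-n} ∪ {p+n+1,…,n²}` (with `p = n²/2`): the inner array uses each number from `1`
to `n²` except the `2n` middle numbers `p-n+1, …, p+n` exactly once. -/
theorem singly_even_inner_bijective (n : ℕ) (h2 : n % 4 = 2) (hn : 6 ≤ n) :
    Set.BijOn (fun rc : ℕ × ℕ => G n rc.1 rc.2)
      (Set.Icc 1 (n - 2) ×ˢ Set.Icc 1 n)
      (Set.Icc 1 (n ^ 2 / 2 - n) ∪ Set.Icc (n ^ 2 / 2 + n + 1) (n ^ 2)) :=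
  singly_even_inner_bijective_general n h2
end

section
/- Both main diagonals of F' have the magic sum: ∑_{r=1}^{n} F'(r,r) = n(n²+1)/2 and ∑_{r=1}^{n} F'(r, n+1−r) = n(n²+1)/2. -/
/-!
The inner rows `i` and `n - 1 - i` are swapped together (`S'` is invariant under
`i ↦ n - 1 - i`), and outside the two middle columns the base array is complementary under the
point reflection `(r, c) ↦ (n - 1 - r, n + 1 - c)`: the two entries sum to `n² + 1`. So on either
diagonal the cells in rows `r` and `n + 1 - r` pair off to `n² + 1`, except for the corner pair
and the middle pair. When `n ≡ 2 (mod 4)` both middle rows are swapped, and the corner and middle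
pairs sum to `n²` and `n² + 2`, in one order on the diagonal and in the other on the antidiagonal.
-/

section

open Finset

theorem sum_Icc_two_mul_eq_sum_add_reflect {M : Type*} [AddCommMonoid M] (f : ℕ → M) (m : ℕ) :
    ∑ r ∈ Icc 1 (2 * m), f r = ∑ r ∈ Icc 1 m, (f r + f (2 * m + 1 - r)) := by
  have hlow : ∑ r ∈ Ico (m + 1) (2 * m + 1), f r = ∑ r ∈ Ico 1 (m + 1), f (2 * m + 1 - r) := by
    rw [sum_Ico_reflect f 1 (by omega : m + 1 ≤ 2 * m + 1 + 1)]
    congr 1; ext r; simp only [mem_Ico]; omega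
  rw [sum_add_distrib, ← Ico_add_one_right_eq_Icc, ← Ico_add_one_right_eq_Icc, ← hlow,
    sum_Ico_consecutive _ (by omega) (by omega)]

theorem sum_Icc_eq_nsmul_of_ends {M : Type*} [AddCommMonoid M] {g : ℕ → M} {m : ℕ} {s : M}
    (hm : 1 < m) (hmid : ∀ r, 1 < r → r < m → g r = s) (hends : g 1 + g m = s + s) :
    ∑ r ∈ Icc 1 m, g r = m • s := by
  have hsplit : Icc 1 m = insert 1 (insert m (Ioo 1 m)) := by
    ext r; simp only [mem_Icc, mem_insert, mem_Ioo]; omega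
  rw [hsplit, sum_insert (by simp only [mem_insert, mem_Ioo]; omega), sum_insert (by simp),
    ← add_assoc, hends, sum_congr rfl fun r hr => hmid r (mem_Ioo.1 hr).1 (mem_Ioo.1 hr).2,
    sum_const, Nat.card_Ioo, ← two_nsmul, ← add_nsmul]
  congr 1; omega

end

theorem two_mul_sq_div_two_of_even {n : ℕ} (hn : Even n) : 2 * (n ^ 2 / 2) = n ^ 2 :=
  Nat.two_mul_div_two_of_even (hn.pow_of_ne_zero two_ne_zero)

theorem B'_add_B'_reflect_of_le {n r c : ℕ} (hn : Even n) (hc₁ : 1 ≤ c) (hc : c ≤ n / 2 - 1)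
    (hr : r ≤ n - 1) : B' n r c + B' n (n - 1 - r) (n + 1 - c) = n ^ 2 + 1 := by
  have hsq := two_mul_sq_div_two_of_even hn
  have hmul : (c - 1) * (n - 2) + (n - 2) = c * (n - 2) := by
    rw [← Nat.succ_mul, Nat.succ_eq_add_one, Nat.sub_add_cancel hc₁]
  have hle : c * (n - 2) ≤ n ^ 2 := by
    calc c * (n - 2) ≤ n * n := Nat.mul_le_mul (by omega) (by omega)
      _ = n ^ 2 := (sq n).symm
  have hrefl : n + 1 - (n + 1 - c) = c := by omega
  rw [B', B', if_pos hc, if_neg (show ¬ n + 1 - c ≤ n / 2 - 1 by omega),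
    if_neg (show n + 1 - c ≠ n / 2 by omega), if_neg (show n + 1 - c ≠ n / 2 + 1 by omega), hrefl]
  split_ifs with hodd
  · omega
  · have : 2 ≤ c := by rcases Nat.not_odd_iff_even.1 hodd with ⟨j, hj⟩; omega
    have : 2 * (n - 2) ≤ c * (n - 2) := Nat.mul_le_mul_right _ this
    omega

theorem B'_add_B'_reflect {n r c : ℕ} (hn : Even n) (hc₁ : 1 ≤ c) (hcn : c ≤ n)
    (hc : c ≠ n / 2) (hc' : c ≠ n / 2 + 1) (hr : r ≤ n - 1) :
    B' n r c + B' n (n - 1 - r) (n + 1 - c) = n ^ 2 + 1 := by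
  rcases le_or_gt c (n / 2 - 1) with hlow | hhigh
  · exact B'_add_B'_reflect_of_le hn hc₁ hlow hr
  · have := Nat.even_iff.1 hn
    have h := B'_add_B'_reflect_of_le (r := n - 1 - r) (c := n + 1 - c) hn (by omega) (by omega)
      (by omega)
    rwa [show n - 1 - (n - 1 - r) = r by omega, show n + 1 - (n + 1 - c) = c by omega,
      add_comm] at h

theorem S'_reflect {n i : ℕ} (hn : Even n) (hi₁ : 1 ≤ i) (hi : i ≤ n - 2) :
    S' n (n - 1 - i) ↔ S' n i := by
  have := Nat.even_iff.1 hn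
  simp only [S', Nat.even_iff, Nat.odd_iff]
  omega

theorem G_add_G_reflect {n i c : ℕ} (hn : Even n) (hi₁ : 1 ≤ i) (hi : i ≤ n - 2) (hc₁ : 1 ≤ c)
    (hcn : c ≤ n) (hc : c ≠ n / 2) (hc' : c ≠ n / 2 + 1) :
    G n i c + G n (n - 1 - i) (n + 1 - c) = n ^ 2 + 1 := by
  have := Nat.even_iff.1 hn
  simp only [G, S'_reflect hn hi₁ hi]
  split_ifs
  · exact B'_add_B'_reflect (c := n + 1 - c) hn (by omega) (by omega) (by omega) (by omega)
      (by omega)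
  · exact B'_add_B'_reflect hn hc₁ hcn hc hc' (by omega)

theorem F'_add_F'_reflect {n r c : ℕ} (hn : Even n) (hr₂ : 2 ≤ r) (hr : r ≤ n - 1) (hc₁ : 1 ≤ c)
    (hcn : c ≤ n) (hc : c ≠ n / 2) (hc' : c ≠ n / 2 + 1) :
    F' n r c + F' n (n + 1 - r) (n + 1 - c) = n ^ 2 + 1 := by
  rw [F', F', if_neg (by omega), if_neg (by omega), if_neg (by omega), if_neg (by omega),
    show n + 1 - r - 1 = n - 1 - (r - 1) by omega]
  exact G_add_G_reflect hn (by omega) (by omega) hc₁ hcn hc hc'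

theorem B'_half_add_B'_half_add_one {n r r' : ℕ} (hn : Even n) (hn₂ : 2 ≤ n) (hr' : r' ≤ n) :
    B' n r (n / 2) + B' n r' (n / 2 + 1) + r' = n ^ 2 + 1 + r := by
  have hsq := two_mul_sq_div_two_of_even hn
  have hle : (n / 2 - 1) * (n - 2) + n ≤ n ^ 2 := by
    calc (n / 2 - 1) * (n - 2) + n ≤ n * (n - 2) + n * 2 := by gcongr <;> omega
      _ ≤ n ^ 2 := by rw [← Nat.mul_add, sq]; exact Nat.mul_le_mul_left _ (by omega)
  rw [B', B', if_neg (show ¬ n / 2 ≤ n / 2 - 1 by omega), if_pos rfl,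
    if_neg (show ¬ n / 2 + 1 ≤ n / 2 - 1 by omega), if_neg (show n / 2 + 1 ≠ n / 2 by omega),
    if_pos rfl]
  omega

theorem S'_half_sub_one {n : ℕ} (hn : n % 4 = 2) : S' n (n / 2 - 1) := by
  simp only [S', Nat.even_iff, Nat.odd_iff]
  omega

theorem S'_half {n : ℕ} (hn : n % 4 = 2) (hn₆ : 6 ≤ n) : S' n (n / 2) := by
  simp only [S', Nat.even_iff, Nat.odd_iff]
  omega

theorem F'_half_diag {n : ℕ} (hn : n % 4 = 2) (hn₆ : 6 ≤ n) :
    F' n (n / 2) (n / 2) + F' n (n / 2 + 1) (n / 2 + 1) = n ^ 2 + 2 := by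
  have hev : Even n := Nat.even_iff.2 (by omega)
  rw [F', F', if_neg (by omega), if_neg (by omega), if_neg (by omega), if_neg (by omega),
    Nat.add_sub_cancel, G, G, if_pos (S'_half_sub_one hn), if_pos (S'_half hn hn₆),
    show n + 1 - n / 2 = n / 2 + 1 by omega, show n + 1 - (n / 2 + 1) = n / 2 by omega]
  have := B'_half_add_B'_half_add_one (r := n / 2) (r' := n / 2 - 1) hev (by omega) (by omega)
  omega

theorem F'_half_antidiag {n : ℕ} (hn : n % 4 = 2) (hn₆ : 6 ≤ n) :
    F' n (n / 2) (n / 2 + 1) + F' n (n / 2 + 1) (n / 2) = n ^ 2 := by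
  have hev : Even n := Nat.even_iff.2 (by omega)
  rw [F', F', if_neg (by omega), if_neg (by omega), if_neg (by omega), if_neg (by omega),
    Nat.add_sub_cancel, G, G, if_pos (S'_half_sub_one hn), if_pos (S'_half hn hn₆),
    show n + 1 - n / 2 = n / 2 + 1 by omega, show n + 1 - (n / 2 + 1) = n / 2 by omega]
  have := B'_half_add_B'_half_add_one (r := n / 2 - 1) (r' := n / 2) hev (by omega) (by omega)
  omega

theorem F'_corner_diag {n : ℕ} (hn : 2 ≤ n) : F' n 1 1 + F' n n n = n ^ 2 := by
  have : 4 ≤ n ^ 2 := by nlinarith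
  rw [F', F', if_pos rfl, if_neg (by omega), if_pos rfl, Rn, R1, R1, if_pos rfl,
    if_neg (by omega), if_pos rfl]
  omega

theorem F'_corner_antidiag {n : ℕ} (hn : 2 ≤ n) : F' n 1 n + F' n n 1 = n ^ 2 + 2 := by
  have : 4 ≤ n ^ 2 := by nlinarith
  rw [F', F', if_pos rfl, if_neg (by omega), if_pos rfl, Rn, R1, R1, if_pos rfl,
    if_neg (by omega), if_pos rfl]
  omega

/-- Both main diagonals of `F'` have the magic sum `n(n²+1)/2`. -/
theorem singly_even_diagonal_sums (n : ℕ) (h2 : n % 4 = 2) (hn : 10 ≤ n) :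
    (∑ r ∈ Finset.Icc 1 n, F' n r r = n * (n ^ 2 + 1) / 2) ∧
    (∑ r ∈ Finset.Icc 1 n, F' n r (n + 1 - r) = n * (n ^ 2 + 1) / 2) := by
  obtain ⟨m, rfl⟩ : ∃ m, n = 2 * m := ⟨n / 2, by omega⟩
  have hev : Even (2 * m) := even_two_mul m
  have hm : (2 * m) / 2 = m := by omega
  rw [mul_assoc, Nat.mul_div_cancel_left _ two_pos,
    sum_Icc_two_mul_eq_sum_add_reflect, sum_Icc_two_mul_eq_sum_add_reflect]
  constructor
  · refine (sum_Icc_eq_nsmul_of_ends (by omega) (fun r h₁ h₂ => ?_) ?_).trans (smul_eq_mul _ _)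
    · exact F'_add_F'_reflect hev (by omega) (by omega) (by omega) (by omega) (by omega) (by omega)
    · have hmid := F'_half_diag h2 (by omega)
      rw [hm] at hmid
      rw [show 2 * m + 1 - 1 = 2 * m by omega, show 2 * m + 1 - m = m + 1 by omega,
        F'_corner_diag (by omega), hmid]
      ring
  · refine (sum_Icc_eq_nsmul_of_ends (by omega) (fun r h₁ h₂ => ?_) ?_).trans (smul_eq_mul _ _)
    · exact F'_add_F'_reflect (c := 2 * m + 1 - r) hev (by omega) (by omega) (by omega) (by omega)
        (by omega) (by omega)
    · have hmid := F'_half_antidiag h2 (by omega)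
      rw [hm] at hmid
      rw [show 2 * m + 1 - 1 = 2 * m by omega, show 2 * m + 1 - m = m + 1 by omega,
        show 2 * m + 1 - 2 * m = 1 by omega, show 2 * m + 1 - (m + 1) = m by omega,
        F'_corner_antidiag (by omega), hmid]
      ring
end
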